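/- The set of differential K-orientations of a proper submersion p: W → B refining a fixed underlying topological K-orientation (a spin^c-reduction of the structure group of the vertical tangent bundle T^vp) is a torsor over Ω^{-1}(W; R[u,u⁻¹])/im(d), acting by translation of the differential-form entry σ. -/

import Mathlib

/- An axiomatic framework for differential extensions of generalized cohomology theories,
following Bunke–Schick, "Differential K-theory. A survey."

`Man` is an abstract category, thought of as the category of compact smooth manifolds
(possibly with boundary) and smooth maps. -/

open CategoryTheory Opposite

universe w v u

/-- Cast an element along an equality of degrees. -/
def gcast {Man : Type u} [Category.{v} Man] {ι : Type*} {Fn : ι → Manᵒᵖ ⥤ AddCommGrpCat.{w}}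
    {m n : ι} (h : m = n) {X : Manᵒᵖ} (x : (Fn m).obj X) : (Fn n).obj X :=
  cast (by rw [h]) x

variable (Man : Type u) [Category.{v} Man]

/-- The context of `N`-valued differential forms on the objects of `Man`, where `N` is a graded
real vector space: `Ωcl n` are the closed forms of (total) degree `n`, `Ωd n` are the degree-`n`
forms modulo exact forms (i.e. modulo `im d`), `pr` sends a closed form to its class modulo
exact forms, and `d` is the de Rham differential (which on a class of forms modulo exact forms
is a well-defined closed form). -/
structure FormsCtx where
  /-- closed `N`-valued forms of degree `n` -/
  Ωcl : ℤ → Manᵒᵖ ⥤ AddCommGrpCat.{w}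
  /-- `N`-valued forms of degree `n` modulo exact forms -/
  Ωd : ℤ → Manᵒᵖ ⥤ AddCommGrpCat.{w}
  pr : ∀ n, Ωcl n ⟶ Ωd n
  d : ∀ n, Ωd n ⟶ Ωcl (n + 1)
  closed_d : ∀ n, pr n ≫ d n = 0

variable {Man}

/-- A generalized cohomology theory `E` (restricted to `Man`), together with ordinary cohomology
`H` with coefficients in the graded real vector space `N`, a natural transformation
`ch : E → H(·; N)`, and the de Rham map `Rham` from closed forms to `H`, which is surjective
with kernel the exact forms (de Rham theorem). -/
structure CohCtx (F : FormsCtx.{w} Man) where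
  E : ℤ → Manᵒᵖ ⥤ AddCommGrpCat.{w}
  H : ℤ → Manᵒᵖ ⥤ AddCommGrpCat.{w}
  ch : ∀ n, E n ⟶ H n
  Rham : ∀ n, F.Ωcl n ⟶ H n
  Rham_surj : ∀ (n : ℤ) (X : Manᵒᵖ) (h : (H n).obj X), ∃ ω, (Rham n).app X ω = h
  Rham_ker : ∀ (n : ℤ) (X : Manᵒᵖ) (ω : (F.Ωcl (n + 1)).obj X),
    (Rham (n + 1)).app X ω = 0 ↔ ∃ η, (F.d n).app X η = ω

/-- A differential extension `Ê` of `(E, ch)` in the sense of Bunke–Schick (Definition 1.1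
of the survey): natural transformations `R` (curvature), `I` (underlying class) and `a`
(action of forms, of degree `+1`) such that `ch ∘ I = Rham ∘ R`, `R ∘ a = d`, and the sequence
`E^{n}(X) --ch--> Ω^{n}(X;N)/im(d) --a--> Ê^{n+1}(X) --I--> E^{n+1}(X) --> 0` is exact. -/
structure DiffExt {F : FormsCtx.{w} Man} (C : CohCtx F) where
  Ehat : ℤ → Manᵒᵖ ⥤ AddCommGrpCat.{w}
  R : ∀ n, Ehat n ⟶ F.Ωcl n
  I : ∀ n, Ehat n ⟶ C.E n
  a : ∀ n, F.Ωd n ⟶ Ehat (n + 1)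
  ch_I : ∀ n, I n ≫ C.ch n = R n ≫ C.Rham n
  R_a : ∀ n, a n ≫ R (n + 1) = F.d n
  I_surj : ∀ (n : ℤ) (X : Manᵒᵖ) (e : (C.E n).obj X), ∃ x, (I n).app X x = e
  exact_at_Ehat : ∀ (n : ℤ) (X : Manᵒᵖ) (x : (Ehat (n + 1)).obj X),
    (I (n + 1)).app X x = 0 ↔ ∃ ω, (a n).app X ω = x
  exact_at_forms : ∀ (n : ℤ) (X : Manᵒᵖ) (ω : (F.Ωd n).obj X),
    (a n).app X ω = 0 ↔ ∃ (ωc : (F.Ωcl n).obj X) (e : (C.E n).obj X),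
      (F.pr n).app X ωc = ω ∧ (C.Rham n).app X ωc = (C.ch n).app X e

/-- A class in a differential extension is flat if its curvature vanishes. -/
def DiffExt.IsFlat {F : FormsCtx.{w} Man} {C : CohCtx F} (hD : DiffExt C) (n : ℤ) (X : Manᵒᵖ)
    (x : (hD.Ehat n).obj X) : Prop :=
  (hD.R n).app X x = 0

/-- The cylinder `[0,1] × B` over the objects of `Man`, with its two inclusions `i0`, `i1`,
the projection `p`, and fiberwise integration `fint` of closed forms over `[0,1]` (with the
canonical orientation of the fiber `[0,1]`), taken modulo exact forms. -/
structure CylinderData (F : FormsCtx.{w} Man) where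
  cyl : Man → Man
  i0 : ∀ B, B ⟶ cyl B
  i1 : ∀ B, B ⟶ cyl B
  p : ∀ B, cyl B ⟶ B
  i0_p : ∀ B, i0 B ≫ p B = 𝟙 B
  i1_p : ∀ B, i1 B ≫ p B = 𝟙 B
  /-- integration over the fiber `[0,1]`, applied to closed forms and taken modulo exact forms -/
  fint : ∀ (n : ℤ) (B : Man), ((F.Ωcl (n + 1)).obj (op (cyl B))) →+ ((F.Ωd n).obj (op B))
  fint_p : ∀ (n : ℤ) (B : Man) (ω : (F.Ωcl (n + 1)).obj (op B)),
    fint n B ((F.Ωcl (n + 1)).map (p B).op ω) = 0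

/-- The functor `X ↦ X × S¹` with the projection `p`, the map `conj` induced by complex
conjugation on `S¹`, and integration over the fiber `S¹` on `E`-cohomology and on forms. -/
structure S1Data (F : FormsCtx.{w} Man) (C : CohCtx F) where
  /-- a point -/
  pt : Man
  /-- `X × S¹` -/
  S : Man → Man
  Smap : ∀ {X Y : Man}, (X ⟶ Y) → (S X ⟶ S Y)
  Smap_id : ∀ X, Smap (𝟙 X) = 𝟙 (S X)
  Smap_comp : ∀ {X Y Z : Man} (f : X ⟶ Y) (g : Y ⟶ Z), Smap (f ≫ g) = Smap f ≫ Smap g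
  p : ∀ X, S X ⟶ X
  p_nat : ∀ {X Y : Man} (f : X ⟶ Y), Smap f ≫ p Y = p X ≫ f
  /-- `id × t`, where `t : S¹ → S¹` is complex conjugation -/
  conj : ∀ X, S X ⟶ S X
  conj_nat : ∀ {X Y : Man} (f : X ⟶ Y), Smap f ≫ conj Y = conj X ≫ Smap f
  /-- integration over the fiber `S¹` in `E`-cohomology -/
  Eint : ∀ (n : ℤ) (X : Man), ((C.E (n + 1)).obj (op (S X))) →+ ((C.E n).obj (op X))
  Eint_nat : ∀ (n : ℤ) {X Y : Man} (f : X ⟶ Y) (e : (C.E (n + 1)).obj (op (S Y))),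
    Eint n X ((C.E (n + 1)).map (Smap f).op e) = (C.E n).map f.op (Eint n Y e)
  /-- integration of (closed) forms over the fiber `S¹` -/
  Ωint : ∀ (n : ℤ) (X : Man), ((F.Ωcl (n + 1)).obj (op (S X))) →+ ((F.Ωcl n).obj (op X))
  Ωint_nat : ∀ (n : ℤ) {X Y : Man} (f : X ⟶ Y) (ω : (F.Ωcl (n + 1)).obj (op (S Y))),
    Ωint n X ((F.Ωcl (n + 1)).map (Smap f).op ω) = (F.Ωcl n).map f.op (Ωint n Y ω)
  /-- integration of forms modulo exact forms over the fiber `S¹` -/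
  Ωdint : ∀ (n : ℤ) (X : Man), ((F.Ωd (n + 1)).obj (op (S X))) →+ ((F.Ωd n).obj (op X))

/-- An `S¹`-integration for a differential extension (Definition 1.8 of the survey): a natural
transformation `∫ : Ê^{n+1}(X × S¹) → Ê^{n}(X)` compatible with `R`, `I` and integration of
forms over the fiber, vanishing on pullbacks from `X` and anticommuting with complex
conjugation of `S¹`. -/
structure S1Integration {F : FormsCtx.{w} Man} {C : CohCtx F} (D : S1Data F C)
    (hD : DiffExt C) where
  int : ∀ (n : ℤ) (X : Man), ((hD.Ehat (n + 1)).obj (op (D.S X))) →+ ((hD.Ehat n).obj (op X))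
  int_nat : ∀ (n : ℤ) {X Y : Man} (f : X ⟶ Y) (x : (hD.Ehat (n + 1)).obj (op (D.S Y))),
    int n X ((hD.Ehat (n + 1)).map (D.Smap f).op x) = (hD.Ehat n).map f.op (int n Y x)
  int_R : ∀ (n : ℤ) (X : Man) (x : (hD.Ehat (n + 1)).obj (op (D.S X))),
    (hD.R n).app (op X) (int n X x) = D.Ωint n X ((hD.R (n + 1)).app (op (D.S X)) x)
  int_I : ∀ (n : ℤ) (X : Man) (x : (hD.Ehat (n + 1)).obj (op (D.S X))),
    (hD.I n).app (op X) (int n X x) = D.Eint n X ((hD.I (n + 1)).app (op (D.S X)) x)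
  int_p : ∀ (n : ℤ) (X : Man) (x : (hD.Ehat (n + 1)).obj (op X)),
    int n X ((hD.Ehat (n + 1)).map (D.p X).op x) = 0
  int_conj : ∀ (n : ℤ) (X : Man) (x : (hD.Ehat (n + 1)).obj (op (D.S X))),
    int n X ((hD.Ehat (n + 1)).map (D.conj X).op x) = - int n X x

/-- Multiplicative structures on the surrounding data: wedge products of forms and the
product on `E`-cohomology. -/
structure MultCtx (F : FormsCtx.{w} Man) (C : CohCtx F) where
  /-- wedge product of closed forms -/
  wcl : ∀ (m n : ℤ) (X : Manᵒᵖ), (F.Ωcl m).obj X → (F.Ωcl n).obj X → (F.Ωcl (m + n)).obj X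
  /-- the constant function `1` as a closed form of degree `0` -/
  wone : ∀ X : Manᵒᵖ, (F.Ωcl 0).obj X
  /-- wedge product `(forms mod exact) ∧ (closed form)`, well defined mod exact forms -/
  wmix : ∀ (m n : ℤ) (X : Manᵒᵖ), (F.Ωd m).obj X → (F.Ωcl n).obj X → (F.Ωd (m + n)).obj X
  /-- wedge product `(closed form) ∧ (forms mod exact)`, well defined mod exact forms -/
  wmix' : ∀ (m n : ℤ) (X : Manᵒᵖ), (F.Ωcl m).obj X → (F.Ωd n).obj X → (F.Ωd (m + n)).obj X
  /-- the product on `E`-cohomology -/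
  emul : ∀ (m n : ℤ) (X : Manᵒᵖ), (C.E m).obj X → (C.E n).obj X → (C.E (m + n)).obj X
  /-- the unit of `E`-cohomology -/
  eone : ∀ X : Manᵒᵖ, (C.E 0).obj X

/-- A multiplicative differential extension (Definition 1.6 of the survey): `Ê` is a functor
to `ℤ`-graded rings, `R` and `I` are multiplicative, and `a(ω) ∪ x = a(ω ∧ R(x))`. -/
structure MultDiffExt {F : FormsCtx.{w} Man} {C : CohCtx F} (M : MultCtx F C)
    (hD : DiffExt C) where
  one : ∀ X : Manᵒᵖ, (hD.Ehat 0).obj X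
  mul : ∀ (m n : ℤ) (X : Manᵒᵖ), (hD.Ehat m).obj X → (hD.Ehat n).obj X → (hD.Ehat (m + n)).obj X
  mul_add : ∀ (m n : ℤ) (X : Manᵒᵖ) (x : (hD.Ehat m).obj X) (y z : (hD.Ehat n).obj X),
    mul m n X x (y + z) = mul m n X x y + mul m n X x z
  add_mul : ∀ (m n : ℤ) (X : Manᵒᵖ) (x y : (hD.Ehat m).obj X) (z : (hD.Ehat n).obj X),
    mul m n X (x + y) z = mul m n X x z + mul m n X y z
  mul_assoc : ∀ (m n k : ℤ) (X : Manᵒᵖ) (x : (hD.Ehat m).obj X) (y : (hD.Ehat n).obj X)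
    (z : (hD.Ehat k).obj X),
    mul (m + n) k X (mul m n X x y) z
      = gcast (_root_.add_assoc m n k).symm (mul m (n + k) X x (mul n k X y z))
  one_mul : ∀ (n : ℤ) (X : Manᵒᵖ) (x : (hD.Ehat n).obj X),
    mul 0 n X (one X) x = gcast (zero_add n).symm x
  mul_one : ∀ (n : ℤ) (X : Manᵒᵖ) (x : (hD.Ehat n).obj X),
    mul n 0 X x (one X) = gcast (add_zero n).symm x
  map_mul : ∀ (m n : ℤ) {X Y : Manᵒᵖ} (f : X ⟶ Y) (x : (hD.Ehat m).obj X)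
    (y : (hD.Ehat n).obj X),
    (hD.Ehat (m + n)).map f (mul m n X x y) = mul m n Y ((hD.Ehat m).map f x) ((hD.Ehat n).map f y)
  map_one : ∀ {X Y : Manᵒᵖ} (f : X ⟶ Y), (hD.Ehat 0).map f (one X) = one Y
  I_mul : ∀ (m n : ℤ) (X : Manᵒᵖ) (x : (hD.Ehat m).obj X) (y : (hD.Ehat n).obj X),
    (hD.I (m + n)).app X (mul m n X x y)
      = M.emul m n X ((hD.I m).app X x) ((hD.I n).app X y)
  I_one : ∀ X : Manᵒᵖ, (hD.I 0).app X (one X) = M.eone X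
  R_mul : ∀ (m n : ℤ) (X : Manᵒᵖ) (x : (hD.Ehat m).obj X) (y : (hD.Ehat n).obj X),
    (hD.R (m + n)).app X (mul m n X x y)
      = M.wcl m n X ((hD.R m).app X x) ((hD.R n).app X y)
  R_one : ∀ X : Manᵒᵖ, (hD.R 0).app X (one X) = M.wone X
  a_mul : ∀ (m n : ℤ) (X : Manᵒᵖ) (ω : (F.Ωd m).obj X) (x : (hD.Ehat n).obj X),
    mul (m + 1) n X ((hD.a m).app X ω) x
      = gcast (by omega : m + n + 1 = m + 1 + n)
          ((hD.a (m + n)).app X (M.wmix m n X ω ((hD.R n).app X x)))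

/-- A Mayer–Vietoris square: `X` is covered by the closed codimension-`0` submanifolds
`X₁, X₂` whose interiors cover `X`, with intersection `X₀ = X₁ ∩ X₂`. -/
structure MVSquare (Man : Type u) [Category.{v} Man] where
  X : Man
  X1 : Man
  X2 : Man
  X0 : Man
  j1 : X1 ⟶ X
  j2 : X2 ⟶ X
  k1 : X0 ⟶ X1
  k2 : X0 ⟶ X2
  comm : k1 ≫ j1 = k2 ≫ j2

/-- A morphism of Mayer–Vietoris squares. -/
structure MVSquareHom (sq sq' : MVSquare Man) where
  fX : sq.X ⟶ sq'.X
  fX1 : sq.X1 ⟶ sq'.X1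
  fX2 : sq.X2 ⟶ sq'.X2
  fX0 : sq.X0 ⟶ sq'.X0
  commj1 : sq.j1 ≫ fX = fX1 ≫ sq'.j1
  commj2 : sq.j2 ≫ fX = fX2 ≫ sq'.j2
  commk1 : sq.k1 ≫ fX1 = fX0 ≫ sq'.k1
  commk2 : sq.k2 ≫ fX2 = fX0 ≫ sq'.k2

variable {F : FormsCtx.{w} Man}

/-- The context for differential K-orientations of a proper submersion `p : W → B` refining a
fixed underlying topological K-orientation (a spin^c reduction of the structure group of the
vertical tangent bundle `T^vp`): `Geom` is the set of geometric data
`(g^{T^vp}, T^hp, ∇̃)` (vertical metric, horizontal distribution, spin^c connection),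
`Ac g` is the closed form `Â^c(∇̃) = Â(∇^{T^vp}) ∧ e^{c₁(∇̃)}` (of total degree `0` in
`Ω(W; ℝ[u,u⁻¹])`), and `trans g₁ g₀` is the transgression form
`Ã^c(∇̃₁, ∇̃₀) ∈ Ω^{-1}(W; ℝ[u,u⁻¹])/im(d)`, with `d Ã^c(∇̃₁, ∇̃₀) = Â^c(∇̃₁) − Â^c(∇̃₀)`. -/
structure KOrientCtx (F : FormsCtx.{w} Man) where
  W : Man
  B : Man
  p : W ⟶ B
  Geom : Type w
  Ac : Geom → (F.Ωcl 0).obj (op W)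
  trans : Geom → Geom → (F.Ωd (-1)).obj (op W)
  trans_d : ∀ g₁ g₀ : Geom,
    (F.d (-1)).app (op W) (trans g₁ g₀) = gcast (by omega : (0 : ℤ) = -1 + 1) (Ac g₁ - Ac g₀)
  trans_self : ∀ g : Geom, trans g g = 0
  trans_add : ∀ g₂ g₁ g₀ : Geom, trans g₂ g₁ + trans g₁ g₀ = trans g₂ g₀

variable (K : KOrientCtx.{w} F)

/-- A tuple `(g^{T^vp}, T^hp, ∇̃, σ)` representing a differential K-orientation:
geometric data together with `σ ∈ Ω^{-1}(W; ℝ[u,u⁻¹])/im(d)`. -/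
def KOrientCtx.OTup : Type _ := K.Geom × (F.Ωd (-1)).obj (op K.W)

/-- Two tuples are equivalent iff `σ₁ − σ₀` equals the transgression form of `Â^c`. -/
def KOrientCtx.ORel (t₁ t₀ : K.OTup) : Prop := t₁.2 - t₀.2 = K.trans t₁.1 t₀.1

theorem KOrientCtx.oRel_equivalence : Equivalence K.ORel where
  refl t := by simp [KOrientCtx.ORel, K.trans_self]
  symm := by
    intro t₁ t₀ h
    have h2 : K.trans t₀.1 t₁.1 + K.trans t₁.1 t₀.1 = 0 := by
      rw [K.trans_add, K.trans_self]
    have h3 : K.trans t₀.1 t₁.1 = -(K.trans t₁.1 t₀.1) := eq_neg_of_add_eq_zero_left h2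
    show t₀.2 - t₁.2 = K.trans t₀.1 t₁.1
    rw [h3, ← h]; abel
  trans := by
    intro t₂ t₁ t₀ h21 h10
    show t₂.2 - t₀.2 = K.trans t₂.1 t₀.1
    rw [← K.trans_add t₂.1 t₁.1 t₀.1, ← h21, ← h10]; abel

/-- The setoid of representing tuples. -/
def KOrientCtx.orientSetoid : Setoid K.OTup := ⟨K.ORel, K.oRel_equivalence⟩

/-- The set of differential K-orientations refining the fixed topological K-orientation:
equivalence classes of tuples `(g^{T^vp}, T^hp, ∇̃, σ)`. -/
def KOrientCtx.DiffKOrientation : Type _ := Quotient K.orientSetoid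

/-- The action of `Ω^{-1}(W; ℝ[u,u⁻¹])/im(d)` on differential K-orientations by translation
of the differential form entry `σ`. -/
def KOrientCtx.translate (τ : (F.Ωd (-1)).obj (op K.W)) :
    K.DiffKOrientation → K.DiffKOrientation :=
  Quotient.map (fun t => (t.1, t.2 + τ)) (by
    intro t₁ t₀ h
    show (t₁.2 + τ) - (t₀.2 + τ) = K.trans t₁.1 t₀.1
    rw [← h]; abel)

/-! Translating `[∇̃₀, σ₀]` by `τ` gives `[∇̃₀, σ₀ + τ]`, and the equivalence of tuples
compares the form entries through a transgression form that does not depend on them. Hence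
`τ` translates `[∇̃₀, σ₀]` into `[∇̃₁, σ₁]` iff `τ = σ₁ - σ₀ + Ã^c(∇̃₀, ∇̃₁)`. -/

namespace KOrientCtx

def orientation (g : K.Geom) (σ : (F.Ωd (-1)).obj (op K.W)) : K.DiffKOrientation :=
  Quotient.mk K.orientSetoid (g, σ)

@[elab_as_elim]
theorem ind {P : K.DiffKOrientation → Prop} (orientation : ∀ g σ, P (K.orientation g σ))
    (o : K.DiffKOrientation) : P o :=
  Quotient.ind (fun t => orientation t.1 t.2) o

theorem orientation_eq_orientation_iff {g₁ g₀ : K.Geom} {σ₁ σ₀ : (F.Ωd (-1)).obj (op K.W)} :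
    K.orientation g₁ σ₁ = K.orientation g₀ σ₀ ↔ σ₁ - σ₀ = K.trans g₁ g₀ :=
  Quotient.eq (r := K.orientSetoid)

theorem translate_orientation (τ : (F.Ωd (-1)).obj (op K.W)) (g : K.Geom)
    (σ : (F.Ωd (-1)).obj (op K.W)) :
    K.translate τ (K.orientation g σ) = K.orientation g (σ + τ) :=
  rfl

theorem translate_zero (o : K.DiffKOrientation) : K.translate 0 o = o := by
  induction o using K.ind with
  | orientation g σ => rw [translate_orientation, add_zero]

theorem translate_add (τ τ' : (F.Ωd (-1)).obj (op K.W)) (o : K.DiffKOrientation) :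
    K.translate (τ + τ') o = K.translate τ (K.translate τ' o) := by
  induction o using K.ind with
  | orientation g σ =>
    simp only [translate_orientation]
    rw [add_comm τ, add_assoc]

theorem translate_orientation_eq_orientation_iff {τ : (F.Ωd (-1)).obj (op K.W)}
    {g₀ g₁ : K.Geom} {σ₀ σ₁ : (F.Ωd (-1)).obj (op K.W)} :
    K.translate τ (K.orientation g₀ σ₀) = K.orientation g₁ σ₁ ↔
      τ = σ₁ - σ₀ + K.trans g₀ g₁ := by
  rw [translate_orientation, orientation_eq_orientation_iff, sub_eq_iff_eq_add, add_comm σ₀,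
    ← eq_sub_iff_add_eq, add_sub_assoc, add_comm (K.trans g₀ g₁)]

theorem existsUnique_translate_eq (o o' : K.DiffKOrientation) :
    ∃! τ : (F.Ωd (-1)).obj (op K.W), K.translate τ o = o' := by
  induction o using K.ind with
  | orientation g₀ σ₀ =>
    induction o' using K.ind with
    | orientation g₁ σ₁ =>
      simpa only [translate_orientation_eq_orientation_iff] using existsUnique_eq

end KOrientCtx

/-- STATEMENT 12. The set of differential K-orientations of a proper submersion `p : W → B`
refining a fixed underlying topological K-orientation is a torsor over
`Ω^{-1}(W; ℝ[u,u⁻¹])/im(d)`, acting by translation of the differential-form entry `σ`: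
the translation is an action, and for any two differential K-orientations there is a unique
form class translating the first into the second. -/
theorem diffKOrientations_torsor (Man : Type u) [Category.{v} Man]
    (F : FormsCtx.{w} Man) (K : KOrientCtx.{w} F) :
    (∀ o : K.DiffKOrientation, K.translate 0 o = o)
    ∧ (∀ (τ τ' : (F.Ωd (-1)).obj (op K.W)) (o : K.DiffKOrientation),
        K.translate (τ + τ') o = K.translate τ (K.translate τ' o))
    ∧ (∀ o o' : K.DiffKOrientation, ∃! τ : (F.Ωd (-1)).obj (op K.W),
        K.translate τ o = o') :=
  ⟨K.translate_zero, K.translate_add, K.existsUnique_translate_eq⟩
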